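/- There exists a recurrent tiling of ℕ×ℕ, i.e. a function f : ℕ×ℕ → T satisfying (T1), (T2) and (T3), if and only if ¬A′ is not valid on the frame ⟨ℕ,≤⟩ (equivalently, if and only if A′ is satisfiable on ⟨ℕ,≤⟩). -/

import Mathlib

namespace FOML

/-- First-order modal formulas over a signature assigning to each arity `n` a type
`Pred n` of `n`-ary predicate letters; individual variables are indexed by `ℕ`.
(0-ary predicate letters are proposition letters.) -/
inductive Fml (Pred : ℕ → Type) : Type
  | atom : {n : ℕ} → Pred n → (Fin n → ℕ) → Fml Pred
  | bot  : Fml Pred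
  | imp  : Fml Pred → Fml Pred → Fml Pred
  | box  : Fml Pred → Fml Pred
  | all  : ℕ → Fml Pred → Fml Pred

namespace Fml

variable {Pred : ℕ → Type}

def neg (φ : Fml Pred) : Fml Pred := imp φ bot
def top : Fml Pred := neg bot
def and (φ ψ : Fml Pred) : Fml Pred := neg (imp φ (neg ψ))
def or (φ ψ : Fml Pred) : Fml Pred := imp (neg φ) ψ
def iff (φ ψ : Fml Pred) : Fml Pred := and (imp φ ψ) (imp ψ φ)
def dia (φ : Fml Pred) : Fml Pred := neg (box (neg φ))
def ex (x : ℕ) (φ : Fml Pred) : Fml Pred := neg (all x (neg φ))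

def bigAnd : List (Fml Pred) → Fml Pred
  | [] => top
  | φ :: l => and φ (bigAnd l)

def bigOr : List (Fml Pred) → Fml Pred
  | [] => bot
  | φ :: l => or φ (bigOr l)

/-- Iterated box: `□⁰φ = φ`, `□ⁿ⁺¹φ = □□ⁿφ`. -/
def boxN : ℕ → Fml Pred → Fml Pred
  | 0, φ => φ
  | n + 1, φ => box (boxN n φ)

/-- Replace every occurrence of `□` by `□⁺`, where `□⁺ψ = ψ ∧ □ψ`
(equivalently, every `◇` by its dual `◇⁺ψ = ◇ψ ∨ ψ`). -/
def plus : Fml Pred → Fml Pred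
  | atom P a => atom P a
  | bot => bot
  | imp φ ψ => imp (plus φ) (plus ψ)
  | box φ => and (plus φ) (box (plus φ))
  | all x φ => all x (plus φ)

end Fml

/-- A Kripke model with expanding domains based on the frame `⟨W, R⟩`:
a domain function `D` into nonempty subsets of the domain `Dom`, expanding along `R`,
and an interpretation `I` of predicate letters at each world, with
`I(w,P) ⊆ D(w)ⁿ` for `n`-ary `P`. -/
structure KModel (W : Type*) (R : W → W → Prop) (Pred : ℕ → Type) where
  Dom : Type
  D : W → Set Dom
  D_ne : ∀ w, (D w).Nonempty
  D_mono : ∀ ⦃w v : W⦄, R w v → D w ⊆ D v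
  I : W → (n : ℕ) → Pred n → (Fin n → Dom) → Prop
  I_dom : ∀ (w : W) (n : ℕ) (P : Pred n) (as : Fin n → Dom), I w n P as → ∀ i, as i ∈ D w

variable {W : Type*} {R : W → W → Prop} {Pred : ℕ → Type}

/-- Truth of a formula at a world of a Kripke model under an assignment. -/
def truth (M : KModel W R Pred) : Fml Pred → W → (ℕ → M.Dom) → Prop
  | .atom (n := n) P args, w, g => M.I w n P (fun i => g (args i))
  | .bot, _, _ => False
  | .imp φ ψ, w, g => truth M φ w g → truth M ψ w g
  | .box φ, w, g => ∀ v : W, R w v → truth M φ v g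
  | .all x φ, w, g => ∀ d ∈ M.D w, truth M φ w (Function.update g x d)

/-- A formula is true at a world `w` if it is true under every assignment
taking values in the domain of `w`. -/
def trueAt (M : KModel W R Pred) (w : W) (φ : Fml Pred) : Prop :=
  ∀ g : ℕ → M.Dom, (∀ x, g x ∈ M.D w) → truth M φ w g

/-- `φ ∈ L(W,R)`: validity on the frame `⟨W,R⟩` (truth in every model with
expanding domains based on it, at every world). -/
def ValidOn (R : W → W → Prop) (φ : Fml Pred) : Prop :=
  ∀ (M : KModel W R Pred) (w : W), trueAt M w φ

/-- The model has (globally) constant domains. -/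
def ConstDom (M : KModel W R Pred) : Prop := ∀ w v : W, M.D w = M.D v

/-- `φ ∈ L_c(W,R)`: truth in every model with constant domains based on `⟨W,R⟩`. -/
def ValidOnC (R : W → W → Prop) (φ : Fml Pred) : Prop :=
  ∀ (M : KModel W R Pred), ConstDom M → ∀ w : W, trueAt M w φ

/-- A finite set `T = {t₀, …, t_s}` of tile types (represented as `Fin (s+1)`, with
`t₀ = 0`), each with four edge colours. -/
structure TileSet where
  s : ℕ
  left : Fin (s + 1) → ℕ
  right : Fin (s + 1) → ℕ
  up : Fin (s + 1) → ℕ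
  down : Fin (s + 1) → ℕ

namespace TileSet

/-- (T1): colours match horizontally. -/
def T1 (ts : TileSet) (f : ℕ → ℕ → Fin (ts.s + 1)) : Prop :=
  ∀ n m : ℕ, ts.right (f n m) = ts.left (f (n + 1) m)

/-- (T2): colours match vertically. -/
def T2 (ts : TileSet) (f : ℕ → ℕ → Fin (ts.s + 1)) : Prop :=
  ∀ n m : ℕ, ts.up (f n m) = ts.down (f n (m + 1))

/-- (T3): the tile type `t₀` occurs infinitely often in the leftmost column. -/
def T3 (ts : TileSet) (f : ℕ → ℕ → Fin (ts.s + 1)) : Prop :=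
  {m : ℕ | f 0 m = 0}.Infinite

end TileSet

/-- The predicate letters used in the encoding: a binary letter `◁`; monadic letters
`M`, `P₀, …, P_{s+2}` and `P`; proposition letters `p` and `q`. -/
inductive Letter (s : ℕ) : ℕ → Type
  | lt : Letter s 2
  | M : Letter s 1
  | P : Fin (s + 3) → Letter s 1
  | Pm : Letter s 1
  | p : Letter s 0
  | q : Letter s 0

namespace Enc

/-- Formulas in the language of the encoding. -/
abbrev F (ts : TileSet) := Fml (Letter ts.s)

/-- The list of all tile types. -/
def tiles (ts : TileSet) : List (Fin (ts.s + 1)) := List.finRange (ts.s + 1)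

/-- Tile indices regarded as indices of the letters `P₀, …, P_{s+2}`. -/
def tl (ts : TileSet) (t : Fin (ts.s + 1)) : Fin (ts.s + 3) := ⟨t.1, by omega⟩

def pp (ts : TileSet) : F ts := .atom Letter.p Fin.elim0
def qq (ts : TileSet) : F ts := .atom Letter.q Fin.elim0
def Mx (ts : TileSet) (v : ℕ) : F ts := .atom Letter.M (fun _ => v)
def Px (ts : TileSet) (j : Fin (ts.s + 3)) (v : ℕ) : F ts := .atom (Letter.P j) (fun _ => v)
def PP (ts : TileSet) (v : ℕ) : F ts := .atom Letter.Pm (fun _ => v)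
def ltA (ts : TileSet) (v w : ℕ) : F ts := .atom Letter.lt ![v, w]

/-- `⟐φ = ◇(π ∧ ◇(¬π ∧ φ))`, for a "marker" formula `π` (the paper uses `π = p`,
and `π = ∀x P(x)` for the operator `⊡`). -/
def pdia (ts : TileSet) (π φ : F ts) : F ts := .dia (.and π (.dia (.and (.neg π) φ)))

/-- Iterated `⟐`. -/
def pdiaN (ts : TileSet) (π : F ts) : ℕ → F ts → F ts
  | 0, φ => φ
  | n + 1, φ => pdia ts π (pdiaN ts π n φ)

/-- `U(x) = ⋀_{t ∈ T} ¬P_t(x)`, with the tile letters given by `Pf`. -/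
def Ug (ts : TileSet) (Pf : Fin (ts.s + 1) → ℕ → F ts) (v : ℕ) : F ts :=
  .bigAnd ((tiles ts).map (fun t => .neg (Pf t v)))

/- The conjuncts of the formula `A`, parametrised by the formulas standing for
`x ◁ y` (`rel`), `M(x)` (`Mf`), `P_t(x)` (`Pf`) and `p` (`pf`); the individual
variables `x`, `y` are `0`, `1`. -/

/-- `A₀ = ∃x □U(x)` -/
def A0g (ts : TileSet) (Pf : Fin (ts.s + 1) → ℕ → F ts) : F ts :=
  .ex 0 (.box (Ug ts Pf 0))

/-- `A₁ = ∃x(¬U(x) ∧ M(x))` -/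
def A1g (ts : TileSet) (Mf : ℕ → F ts) (Pf : Fin (ts.s + 1) → ℕ → F ts) : F ts :=
  .ex 0 (.and (.neg (Ug ts Pf 0)) (Mf 0))

/-- `A₂ = ∀x∃y (x ◁ y)` -/
def A2g (ts : TileSet) (rel : ℕ → ℕ → F ts) : F ts := .all 0 (.ex 1 (rel 0 1))

/-- `A₃ = ∀x∀y(x◁y → □(∃x M(x) → x◁y))` -/
def A3g (ts : TileSet) (rel : ℕ → ℕ → F ts) (Mf : ℕ → F ts) : F ts :=
  .all 0 (.all 1 (.imp (rel 0 1) (.box (.imp (.ex 0 (Mf 0)) (rel 0 1)))))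

/-- `A₄ = ∀x∀y(x◁y → □(M(x) ↔ ¬p ∧ ⟐M(y) ∧ ¬⟐²M(y)))` -/
def A4g (ts : TileSet) (rel : ℕ → ℕ → F ts) (Mf : ℕ → F ts) (pf : F ts) : F ts :=
  .all 0 (.all 1 (.imp (rel 0 1)
    (.box (.iff (Mf 0)
      (.and (.neg pf) (.and (pdia ts pf (Mf 1)) (.neg (pdiaN ts pf 2 (Mf 1)))))))))

/-- `A₅ = ∀x∀y □⋀_{t∈T}(M(x) ∧ P_t(y) → □(M(x) → P_t(y)))` -/
def A5g (ts : TileSet) (Mf : ℕ → F ts) (Pf : Fin (ts.s + 1) → ℕ → F ts) : F ts :=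
  .all 0 (.all 1 (.box (.bigAnd ((tiles ts).map fun t =>
    .imp (.and (Mf 0) (Pf t 1)) (.box (.imp (Mf 0) (Pf t 1)))))))

/-- `A₆ = ∀x □⋀_{t∈T}(P_t(x) → ⋀_{t'≠t} ¬P_{t'}(x))` -/
def A6g (ts : TileSet) (Pf : Fin (ts.s + 1) → ℕ → F ts) : F ts :=
  .all 0 (.box (.bigAnd ((tiles ts).map fun t =>
    .imp (Pf t 0)
      (.bigAnd (((tiles ts).filter (fun t' => decide (t' ≠ t))).map fun t' => .neg (Pf t' 0))))))

/-- `A₇ = ∀x∀y □⋀_{t∈T}(x◁y ∧ P_t(x) → ⋁_{right(t)=left(t')} P_{t'}(y))` -/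
def A7g (ts : TileSet) (rel : ℕ → ℕ → F ts) (Pf : Fin (ts.s + 1) → ℕ → F ts) : F ts :=
  .all 0 (.all 1 (.box (.bigAnd ((tiles ts).map fun t =>
    .imp (.and (rel 0 1) (Pf t 0))
      (.bigOr (((tiles ts).filter fun t' => decide (ts.right t = ts.left t')).map
        fun t' => Pf t' 1))))))

/-- `A₈ = ∀x∀y □⋀_{t∈T}(M(x) ∧ P_t(y) → □(∃y(x◁y ∧ M(y)) → ⋁_{up(t)=down(t')} P_{t'}(y)))` -/
def A8g (ts : TileSet) (rel : ℕ → ℕ → F ts) (Mf : ℕ → F ts)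
    (Pf : Fin (ts.s + 1) → ℕ → F ts) : F ts :=
  .all 0 (.all 1 (.box (.bigAnd ((tiles ts).map fun t =>
    .imp (.and (Mf 0) (Pf t 1))
      (.box (.imp (.ex 1 (.and (rel 0 1) (Mf 1)))
        (.bigOr (((tiles ts).filter fun t' => decide (ts.up t = ts.down t')).map
          fun t' => Pf t' 1))))))))

/-- `A₉ = ∀x(M(x) → □⟐P_{t₀}(x))` -/
def A9g (ts : TileSet) (Mf : ℕ → F ts) (Pf : Fin (ts.s + 1) → ℕ → F ts) (pf : F ts) : F ts :=
  .all 0 (.imp (Mf 0) (.box (pdia ts pf (Pf 0 0))))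

/-- The list `[A₀, …, A₈]` (all conjuncts of `A` except `A₉`), parametrised. -/
def AlistB (ts : TileSet) (rel : ℕ → ℕ → F ts) (Mf : ℕ → F ts)
    (Pf : Fin (ts.s + 1) → ℕ → F ts) (pf : F ts) : List (F ts) :=
  [A0g ts Pf, A1g ts Mf Pf, A2g ts rel, A3g ts rel Mf, A4g ts rel Mf pf,
   A5g ts Mf Pf, A6g ts Pf, A7g ts rel Pf, A8g ts rel Mf Pf]

/-- The tile letters `P_{t₀}, …, P_{t_s}`, i.e. `P₀, …, P_s`. -/
def PfA (ts : TileSet) : Fin (ts.s + 1) → ℕ → F ts := fun t v => Px ts (tl ts t) v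

/-- The formula `A`: the conjunction of `A₀` through `A₉`. -/
def A (ts : TileSet) : F ts :=
  .bigAnd (AlistB ts (ltA ts) (Mx ts) (PfA ts) (pp ts) ++
    [A9g ts (Mx ts) (PfA ts) (pp ts)])

/-- The formula `B`: the conjunction of `A₀` through `A₈`. -/
def B (ts : TileSet) : F ts := .bigAnd (AlistB ts (ltA ts) (Mx ts) (PfA ts) (pp ts))

/-- `A₉• = ∀x(M(x) → □(∃y M(y) → ⟐(∃y M(y) → P_{t₀}(x))))` -/
def A9bul (ts : TileSet) : F ts :=
  .all 0 (.imp (Mx ts 0) (.box (.imp (.ex 1 (Mx ts 1))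
    (pdia ts (pp ts) (.imp (.ex 1 (Mx ts 1)) (PfA ts 0 0))))))

/-- The formula `A•`: the conjunction of `A₀` through `A₈` together with `A₉•`. -/
def Abullet (ts : TileSet) : F ts :=
  .bigAnd (AlistB ts (ltA ts) (Mx ts) (PfA ts) (pp ts) ++ [A9bul ts])

/-- `⟐(P_{s+1}(x) ∧ P_{s+2}(y))`, the formula substituted for `x ◁ y` in `A′`. -/
def relA' (ts : TileSet) (v w : ℕ) : F ts :=
  pdia ts (pp ts) (.and (Px ts ⟨ts.s + 1, by omega⟩ v) (Px ts ⟨ts.s + 2, by omega⟩ w))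

/-- The formula `A′`: the result of substituting `⟐(P_{s+1}(x) ∧ P_{s+2}(y))` for
`x ◁ y` throughout `A`. -/
def A' (ts : TileSet) : F ts :=
  .bigAnd (AlistB ts (relA' ts) (Mx ts) (PfA ts) (pp ts) ++
    [A9g ts (Mx ts) (PfA ts) (pp ts)])

/-- `∀x P(x)`, the marker formula of the operator `⊡`. -/
def pfS (ts : TileSet) : F ts := .all 0 (PP ts 0)

/-- `⊡φ = ◇(∀x P(x) ∧ ◇(¬∀x P(x) ∧ φ))`. -/
def bdia (ts : TileSet) (φ : F ts) : F ts := pdia ts (pfS ts) φ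

/-- Iterated `⊡`. -/
def bdiaN (ts : TileSet) (n : ℕ) (φ : F ts) : F ts := pdiaN ts (pfS ts) n φ

/-- `q ∧ P(v)`, the replacement of `M(v)`. -/
def MS (ts : TileSet) (v : ℕ) : F ts := .and (qq ts) (PP ts v)

/-- `βₙ(x) = ∃y(⊡^{s+4}(q ∧ P(y)) ∧ ¬⊡^{s+5}(q ∧ P(y)) ∧
⊡(⊡^{n+1}(q ∧ P(y)) ∧ ¬⊡^{n+2}(q ∧ P(y)) ∧ P(x)))`, and `βₙ(y)` with `x`, `y` exchanged
(the variables `x`, `y` are `0`, `1`, so the bound variable is `1 - v`). -/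
def beta (ts : TileSet) (n : Fin (ts.s + 3)) (v : ℕ) : F ts :=
  .ex (1 - v) (.and (bdiaN ts (ts.s + 4) (MS ts (1 - v)))
    (.and (.neg (bdiaN ts (ts.s + 5) (MS ts (1 - v))))
      (bdia ts (.and (bdiaN ts ((n : ℕ) + 1) (MS ts (1 - v)))
        (.and (.neg (bdiaN ts ((n : ℕ) + 2) (MS ts (1 - v)))) (PP ts v))))))

/-- The replacement `βₜ` of the tile letters. -/
def PfS (ts : TileSet) : Fin (ts.s + 1) → ℕ → F ts := fun t v => beta ts (tl ts t) v

/-- `⊡(β_{s+1}(x) ∧ β_{s+2}(y))`, the replacement of `x ◁ y` in `A*`. -/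
def relS (ts : TileSet) (v w : ℕ) : F ts :=
  bdia ts (.and (beta ts ⟨ts.s + 1, by omega⟩ v) (beta ts ⟨ts.s + 2, by omega⟩ w))

/-- `A₄* = ∀x∀y(⊡(β_{s+1}(x) ∧ β_{s+2}(y)) →
□(q ∧ P(x) ↔ ¬∀x P(x) ∧ ⊡^{s+4}(q ∧ P(y)) ∧ ¬⊡^{s+5}(q ∧ P(y))))` -/
def A4star (ts : TileSet) : F ts :=
  .all 0 (.all 1 (.imp (relS ts 0 1)
    (.box (.iff (MS ts 0)
      (.and (.neg (pfS ts))
        (.and (bdiaN ts (ts.s + 4) (MS ts 1)) (.neg (bdiaN ts (ts.s + 5) (MS ts 1)))))))))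

/-- `A₉* = ∀x(q ∧ P(x) → □⊡β₀(x))` -/
def A9star (ts : TileSet) : F ts :=
  .all 0 (.imp (MS ts 0) (.box (bdia ts (beta ts ⟨0, by omega⟩ 0))))

/-- The list `[A₀*, …, A₈*]`. -/
def BstarList (ts : TileSet) : List (F ts) :=
  [A0g ts (PfS ts), A1g ts (MS ts) (PfS ts), A2g ts (relS ts), A3g ts (relS ts) (MS ts),
   A4star ts, A5g ts (MS ts) (PfS ts), A6g ts (PfS ts), A7g ts (relS ts) (PfS ts),
   A8g ts (relS ts) (MS ts) (PfS ts)]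

/-- The formula `A*`: the conjunction of `A₀*` through `A₉*`. -/
def Astar (ts : TileSet) : F ts := .bigAnd (BstarList ts ++ [A9star ts])

/-- The formula `B*`: the conjunction of `A₀*` through `A₈*`. -/
def Bstar (ts : TileSet) : F ts := .bigAnd (BstarList ts)

/-- The formula `A⁺`: the result of replacing every `□` in `A*` by `□⁺`. -/
def Aplus (ts : TileSet) : F ts := (Astar ts).plus

/-- The formula `B⁺`: the result of replacing every `□` in `B*` by `□⁺`. -/
def Bplus (ts : TileSet) : F ts := (Bstar ts).plus

end Enc

end FOML
namespace FOML
open Enc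

section TruthLemmas
variable {W : Type*} {R : W → W → Prop} {Pred : ℕ → Type} {M : KModel W R Pred}
  {φ ψ : Fml Pred} {w : W} {g : ℕ → M.Dom}

theorem truth_neg : truth M (Fml.neg φ) w g ↔ ¬ truth M φ w g := Iff.rfl

theorem truth_imp : truth M (Fml.imp φ ψ) w g ↔ (truth M φ w g → truth M ψ w g) := Iff.rfl

theorem truth_box : truth M (Fml.box φ) w g ↔ ∀ v, R w v → truth M φ v g := Iff.rfl

theorem truth_all {x : ℕ} :
    truth M (Fml.all x φ) w g ↔ ∀ d ∈ M.D w, truth M φ w (Function.update g x d) := Iff.rfl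

theorem truth_and : truth M (Fml.and φ ψ) w g ↔ truth M φ w g ∧ truth M ψ w g := by
  show ¬(truth M φ w g → ¬ truth M ψ w g) ↔ _
  tauto

theorem truth_or : truth M (Fml.or φ ψ) w g ↔ truth M φ w g ∨ truth M ψ w g := by
  show ((truth M φ w g → False) → truth M ψ w g) ↔ _
  tauto

theorem truth_iff : truth M (Fml.iff φ ψ) w g ↔ (truth M φ w g ↔ truth M ψ w g) := by
  rw [Fml.iff, truth_and, truth_imp, truth_imp]
  exact ⟨fun h => Iff.intro h.1 h.2, fun h => ⟨h.mp, h.mpr⟩⟩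

theorem truth_dia : truth M (Fml.dia φ) w g ↔ ∃ v, R w v ∧ truth M φ v g := by
  constructor
  · intro h; by_contra hc; push_neg at hc
    exact h (fun v hv hφ => hc v hv hφ)
  · rintro ⟨v, hv, hφ⟩ h; exact h v hv hφ

theorem truth_ex {x : ℕ} :
    truth M (Fml.ex x φ) w g ↔ ∃ d ∈ M.D w, truth M φ w (Function.update g x d) := by
  constructor
  · intro h; by_contra hc; push_neg at hc
    exact h (fun d hd hφ => hc d hd hφ)
  · rintro ⟨d, hd, hφ⟩ h; exact h d hd hφ

theorem truth_bigAnd {l : List (Fml Pred)} :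
    truth M (Fml.bigAnd l) w g ↔ ∀ χ ∈ l, truth M χ w g := by
  induction l with
  | nil => simp [Fml.bigAnd, Fml.top, Fml.neg, truth]
  | cons χ l ih => rw [Fml.bigAnd, truth_and, ih]; simp

theorem truth_bigOr {l : List (Fml Pred)} :
    truth M (Fml.bigOr l) w g ↔ ∃ χ ∈ l, truth M χ w g := by
  induction l with
  | nil => simp [Fml.bigOr, truth]
  | cons χ l ih => rw [Fml.bigOr, truth_or, ih]; simp

end TruthLemmas

section Sem
variable {ts : TileSet} (Mo : KModel ℕ (fun a b : ℕ => a ≤ b) (Letter ts.s))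

/-- semantic proposition letter `p` -/
def sPp (v : ℕ) : Prop := Mo.I v 0 Letter.p (fun i => i.elim0)
/-- semantic `M` -/
def sM (d : Mo.Dom) (v : ℕ) : Prop := Mo.I v 1 Letter.M (fun _ => d)
/-- semantic `P_j` -/
def sP (j : Fin (ts.s + 3)) (d : Mo.Dom) (v : ℕ) : Prop :=
  Mo.I v 1 (Letter.P j) (fun _ => d)
/-- semantic `⟐` for time-predicates -/
def sDia (φ : ℕ → Prop) (v : ℕ) : Prop :=
  ∃ u₁, v ≤ u₁ ∧ sPp Mo u₁ ∧ ∃ u₂, u₁ ≤ u₂ ∧ ¬ sPp Mo u₂ ∧ φ u₂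
/-- semantic `x ◁ y` (i.e. `relA'`) -/
def sRel (d e : Mo.Dom) (v : ℕ) : Prop :=
  sDia Mo (fun u => sP Mo ⟨ts.s + 1, by omega⟩ d u ∧ sP Mo ⟨ts.s + 2, by omega⟩ e u) v

theorem sDia_mono {φ : ℕ → Prop} {v v' : ℕ} (h : v' ≤ v) (hd : sDia Mo φ v) :
    sDia Mo φ v' := by
  obtain ⟨u₁, h1, h2, h3⟩ := hd
  exact ⟨u₁, le_trans h h1, h2, h3⟩

theorem sRel_mono {d e : Mo.Dom} {v v' : ℕ} (h : v' ≤ v) (hd : sRel Mo d e v) :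
    sRel Mo d e v' := sDia_mono Mo h hd

variable {v w : ℕ} {g : ℕ → Mo.Dom}

theorem truth_pp : truth Mo (pp ts) v g ↔ sPp Mo v :=
  iff_of_eq (congrArg (Mo.I v 0 Letter.p) (funext fun i => i.elim0))

theorem truth_Mx {i : ℕ} : truth Mo (Mx ts i) v g ↔ sM Mo (g i) v := Iff.rfl

theorem truth_Px {j : Fin (ts.s + 3)} {i : ℕ} :
    truth Mo (Px ts j i) v g ↔ sP Mo j (g i) v := Iff.rfl

theorem truth_pdia {ψ : F ts} :
    truth Mo (pdia ts (pp ts) ψ) v g ↔ sDia Mo (fun u => truth Mo ψ u g) v := by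
  simp only [pdia, truth_dia, truth_and, truth_neg, truth_pp, sDia]

theorem truth_rel {i j : ℕ} :
    truth Mo (relA' ts i j) v g ↔ sRel Mo (g i) (g j) v := by
  simp only [relA', truth_pdia, truth_and, truth_Px, sRel]

end Sem


section Conj2
variable {ts : TileSet} (Mo : KModel ℕ (fun a b : ℕ => a ≤ b) (Letter ts.s))
variable {w : ℕ} {g : ℕ → Mo.Dom}

theorem truth_A0 :
    truth Mo (A0g ts (PfA ts)) w g ↔
      ∃ d ∈ Mo.D w, ∀ v, w ≤ v → ∀ t : Fin (ts.s + 1), ¬ sP Mo (tl ts t) d v := by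
  simp [A0g, Ug, pdiaN, truth_all, truth_box, truth_imp, truth_and, truth_neg, truth_ex,
    truth_bigAnd, truth_bigOr, truth_iff, truth_rel, truth_Mx, truth_Px, truth_pp, truth_pdia,
    PfA, tiles, Function.update_apply, and_imp]

theorem truth_A1 :
    truth Mo (A1g ts (Mx ts) (PfA ts)) w g ↔
      ∃ d ∈ Mo.D w, (∃ t, sP Mo (tl ts t) d w) ∧ sM Mo d w := by
  simp [A1g, Ug, pdiaN, truth_all, truth_box, truth_imp, truth_and, truth_neg, truth_ex,
    truth_bigAnd, truth_bigOr, truth_iff, truth_rel, truth_Mx, truth_Px, truth_pp, truth_pdia,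
    PfA, tiles, Function.update_apply, and_imp]

theorem truth_A2 :
    truth Mo (A2g ts (relA' ts)) w g ↔
      ∀ d ∈ Mo.D w, ∃ e ∈ Mo.D w, sRel Mo d e w := by
  simp [A2g, Ug, pdiaN, truth_all, truth_box, truth_imp, truth_and, truth_neg, truth_ex,
    truth_bigAnd, truth_bigOr, truth_iff, truth_rel, truth_Mx, truth_Px, truth_pp, truth_pdia,
    PfA, tiles, Function.update_apply, and_imp]

theorem truth_A3 :
    truth Mo (A3g ts (relA' ts) (Mx ts)) w g ↔
      ∀ d ∈ Mo.D w, ∀ e ∈ Mo.D w, sRel Mo d e w →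
        ∀ v, w ≤ v → (∃ z ∈ Mo.D v, sM Mo z v) → sRel Mo d e v := by
  simp [A3g, Ug, pdiaN, truth_all, truth_box, truth_imp, truth_and, truth_neg, truth_ex,
    truth_bigAnd, truth_bigOr, truth_iff, truth_rel, truth_Mx, truth_Px, truth_pp, truth_pdia,
    PfA, tiles, Function.update_apply, and_imp]

theorem truth_A4 :
    truth Mo (A4g ts (relA' ts) (Mx ts) (pp ts)) w g ↔
      ∀ d ∈ Mo.D w, ∀ e ∈ Mo.D w, sRel Mo d e w →
        ∀ v, w ≤ v →
          (sM Mo d v ↔ ¬ sPp Mo v ∧ sDia Mo (sM Mo e) v ∧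
            ¬ sDia Mo (fun u => sDia Mo (sM Mo e) u) v) := by
  simp [A4g, Ug, pdiaN, truth_all, truth_box, truth_imp, truth_and, truth_neg, truth_ex,
    truth_bigAnd, truth_bigOr, truth_iff, truth_rel, truth_Mx, truth_Px, truth_pp, truth_pdia,
    PfA, tiles, Function.update_apply, and_imp]

theorem truth_A5 :
    truth Mo (A5g ts (Mx ts) (PfA ts)) w g ↔
      ∀ d ∈ Mo.D w, ∀ e ∈ Mo.D w, ∀ v, w ≤ v → ∀ t : Fin (ts.s + 1),
        sM Mo d v → sP Mo (tl ts t) e v →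
          ∀ u, v ≤ u → sM Mo d u → sP Mo (tl ts t) e u := by
  simp [A5g, Ug, pdiaN, truth_all, truth_box, truth_imp, truth_and, truth_neg, truth_ex,
    truth_bigAnd, truth_bigOr, truth_iff, truth_rel, truth_Mx, truth_Px, truth_pp, truth_pdia,
    PfA, tiles, Function.update_apply, and_imp]

theorem truth_A6 :
    truth Mo (A6g ts (PfA ts)) w g ↔
      ∀ d ∈ Mo.D w, ∀ v, w ≤ v → ∀ t : Fin (ts.s + 1),
        sP Mo (tl ts t) d v → ∀ t', t' ≠ t → ¬ sP Mo (tl ts t') d v := by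
  simp [A6g, Ug, pdiaN, truth_all, truth_box, truth_imp, truth_and, truth_neg, truth_ex,
    truth_bigAnd, truth_bigOr, truth_iff, truth_rel, truth_Mx, truth_Px, truth_pp, truth_pdia,
    PfA, tiles, Function.update_apply, and_imp]

theorem truth_A7 :
    truth Mo (A7g ts (relA' ts) (PfA ts)) w g ↔
      ∀ d ∈ Mo.D w, ∀ e ∈ Mo.D w, ∀ v, w ≤ v → ∀ t : Fin (ts.s + 1),
        sRel Mo d e v → sP Mo (tl ts t) d v →
          ∃ t', ts.right t = ts.left t' ∧ sP Mo (tl ts t') e v := by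
  simp [A7g, Ug, pdiaN, truth_all, truth_box, truth_imp, truth_and, truth_neg, truth_ex,
    truth_bigAnd, truth_bigOr, truth_iff, truth_rel, truth_Mx, truth_Px, truth_pp, truth_pdia,
    PfA, tiles, Function.update_apply, and_imp]

theorem truth_A8 :
    truth Mo (A8g ts (relA' ts) (Mx ts) (PfA ts)) w g ↔
      ∀ d ∈ Mo.D w, ∀ e ∈ Mo.D w, ∀ v, w ≤ v → ∀ t : Fin (ts.s + 1),
        sM Mo d v → sP Mo (tl ts t) e v →
          ∀ u, v ≤ u → ∀ z ∈ Mo.D u, sRel Mo d z u → sM Mo z u →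
            ∃ t', ts.up t = ts.down t' ∧ sP Mo (tl ts t') e u := by
  simp [A8g, Ug, pdiaN, truth_all, truth_box, truth_imp, truth_and, truth_neg, truth_ex,
    truth_bigAnd, truth_bigOr, truth_iff, truth_rel, truth_Mx, truth_Px, truth_pp, truth_pdia,
    PfA, tiles, Function.update_apply, and_imp]

theorem truth_A9 :
    truth Mo (A9g ts (Mx ts) (PfA ts) (pp ts)) w g ↔
      ∀ d ∈ Mo.D w, sM Mo d w → ∀ v, w ≤ v → sDia Mo (sP Mo (tl ts 0) d) v := by
  simp [A9g, Ug, pdiaN, truth_all, truth_box, truth_imp, truth_and, truth_neg, truth_ex,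
    truth_bigAnd, truth_bigOr, truth_iff, truth_rel, truth_Mx, truth_Px, truth_pp, truth_pdia,
    PfA, tiles, Function.update_apply, and_imp]

end Conj2

section Fwd
open Enc

/-- code for intended `◁`-pairs -/
def decPair (r : ℕ) : Option (ℕ × ℕ) × Option (ℕ × ℕ) :=
  if r = 0 then (none, none)
  else (some (Nat.unpair (r - 1)), some ((Nat.unpair (r - 1)).1 + 1, (Nat.unpair (r - 1)).2))

/-- schedule hitting every intended pair at unboundedly many indices -/
def sched (k : ℕ) : Option (ℕ × ℕ) × Option (ℕ × ℕ) := decPair (Nat.unpair k).2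

def intended (pr : Option (ℕ × ℕ) × Option (ℕ × ℕ)) : Prop :=
  pr = (none, none) ∨ ∃ n m : ℕ, pr = (some (n, m), some (n + 1, m))

theorem sched_intended (k : ℕ) : intended (sched k) := by
  unfold sched decPair intended
  split
  · exact Or.inl rfl
  · exact Or.inr ⟨_, _, rfl⟩

theorem sched_surj {pr} (h : intended pr) (N : ℕ) : ∃ k, N ≤ k ∧ sched k = pr := by
  rcases h with h | ⟨n, m, h⟩
  · exact ⟨Nat.pair N 0, Nat.left_le_pair N 0, by simp [sched, Nat.unpair_pair, decPair, h]⟩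
  · refine ⟨Nat.pair N (Nat.pair n m + 1), Nat.left_le_pair _ _, ?_⟩
    simp [sched, Nat.unpair_pair, decPair, h]

variable (ts : TileSet) (f : ℕ → ℕ → Fin (ts.s + 1))

/-- interpretation of the forward model -/
def fI (w : ℕ) : (n : ℕ) → Letter ts.s n → (Fin n → Option (ℕ × ℕ)) → Prop
  | _, Letter.p, _ => w % 2 = 1
  | _, Letter.q, _ => False
  | _, Letter.lt, _ => False
  | _, Letter.Pm, _ => False
  | _, Letter.M, as => ∃ nm : ℕ × ℕ, as 0 = some nm ∧ w = 2 * (nm.1 + nm.2)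
  | _, Letter.P j, as =>
      w % 2 = 0 ∧
      (if h : (j : ℕ) < ts.s + 1 then
         ∃ nm : ℕ × ℕ, as 0 = some nm ∧ f nm.1 (nm.2 + w / 2) = ⟨j, h⟩
       else if (j : ℕ) = ts.s + 1 then as 0 = (sched (w / 2)).1
       else as 0 = (sched (w / 2)).2)

/-- the model witnessing satisfiability of `A'` from a recurrent tiling -/
def fwdModel : KModel ℕ (fun a b : ℕ => a ≤ b) (Letter ts.s) where
  Dom := Option (ℕ × ℕ)
  D _ := Set.univ
  D_ne _ := ⟨none, trivial⟩
  D_mono _ _ _ := fun _ h => h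
  I := fI ts f
  I_dom := fun _ _ _ _ _ _ => trivial

attribute [reducible] fwdModel

theorem fPp {v : ℕ} : sPp (fwdModel ts f) v ↔ v % 2 = 1 := Iff.rfl

theorem fM {d v} : sM (fwdModel ts f) d v ↔
    ∃ nm : ℕ × ℕ, d = some nm ∧ v = 2 * (nm.1 + nm.2) := Iff.rfl

theorem fP {t : Fin (ts.s + 1)} {d v} :
    sP (fwdModel ts f) (tl ts t) d v ↔
      v % 2 = 0 ∧ ∃ nm : ℕ × ℕ, d = some nm ∧ f nm.1 (nm.2 + v / 2) = t := by
  show (v % 2 = 0 ∧ _) ↔ _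
  rw [dif_pos (show ((tl ts t : ℕ)) < ts.s + 1 from t.2)]
  constructor <;> rintro ⟨h1, nm, h2, h3⟩ <;>
    exact ⟨h1, nm, h2, by simpa [tl, Fin.ext_iff] using h3⟩

theorem fP1 {d v} :
    sP (fwdModel ts f) ⟨ts.s + 1, by omega⟩ d v ↔
      v % 2 = 0 ∧ d = (sched (v / 2)).1 := by
  show (v % 2 = 0 ∧ _) ↔ _
  rw [dif_neg (by simp), if_pos rfl]

theorem fP2 {d v} :
    sP (fwdModel ts f) ⟨ts.s + 2, by omega⟩ d v ↔
      v % 2 = 0 ∧ d = (sched (v / 2)).2 := by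
  show (v % 2 = 0 ∧ _) ↔ _
  rw [dif_neg (by simp), if_neg (by simp)]

theorem fDia {φ : ℕ → Prop} {v : ℕ} :
    sDia (fwdModel ts f) φ v ↔ ∃ u, v < u ∧ u % 2 = 0 ∧ φ u := by
  unfold sDia
  constructor
  · rintro ⟨u₁, h1, h2, u₂, h3, h4, h5⟩
    rw [fPp] at h2 h4
    exact ⟨u₂, by omega, by omega, h5⟩
  · rintro ⟨u, h1, h2, h3⟩
    refine ⟨u - 1, by omega, ?_, u, by omega, ?_, h3⟩
    · rw [fPp]; omega
    · rw [fPp]; omega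

theorem fRel {d e v} :
    sRel (fwdModel ts f) d e v ↔ ∃ k, v < 2 * k ∧ sched k = (d, e) := by
  unfold sRel
  rw [fDia]
  constructor
  · rintro ⟨u, h1, h2, h3, h4⟩
    rw [fP1] at h3; rw [fP2] at h4
    refine ⟨u / 2, by omega, ?_⟩
    rw [Prod.ext_iff]
    exact ⟨h3.2.symm, h4.2.symm⟩
  · rintro ⟨k, h1, h2⟩
    refine ⟨2 * k, h1, by omega, ?_, ?_⟩
    · rw [fP1]; constructor; omega
      rw [show 2 * k / 2 = k by omega, h2]
    · rw [fP2]; constructor; omega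
      rw [show 2 * k / 2 = k by omega, h2]

theorem fRel_intended {d e v} (h : sRel (fwdModel ts f) d e v) : intended (d, e) := by
  rw [fRel] at h
  obtain ⟨k, _, hk⟩ := h
  rw [← hk]; exact sched_intended k

theorem fRel_of_intended {d e} (h : intended (d, e)) (v : ℕ) :
    sRel (fwdModel ts f) d e v := by
  rw [fRel]
  obtain ⟨k, hk1, hk2⟩ := sched_surj h (v + 1)
  exact ⟨k, by omega, hk2⟩

end Fwd

section FwdMain
open Enc

theorem infinite_unbounded {S : Set ℕ} (h : S.Infinite) (N : ℕ) : ∃ k ∈ S, N < k := by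
  by_contra hc
  push_neg at hc
  exact h ((Set.finite_Iic N).subset fun x hx => hc x hx)

variable {ts : TileSet}

theorem truth_A'_iff (Mo : KModel ℕ (fun a b : ℕ => a ≤ b) (Letter ts.s)) {w : ℕ}
    {g : ℕ → Mo.Dom} :
    truth Mo (A' ts) w g ↔
      (truth Mo (A0g ts (PfA ts)) w g ∧ truth Mo (A1g ts (Mx ts) (PfA ts)) w g ∧
       truth Mo (A2g ts (relA' ts)) w g ∧ truth Mo (A3g ts (relA' ts) (Mx ts)) w g ∧
       truth Mo (A4g ts (relA' ts) (Mx ts) (pp ts)) w g ∧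
       truth Mo (A5g ts (Mx ts) (PfA ts)) w g ∧ truth Mo (A6g ts (PfA ts)) w g ∧
       truth Mo (A7g ts (relA' ts) (PfA ts)) w g ∧
       truth Mo (A8g ts (relA' ts) (Mx ts) (PfA ts)) w g ∧
       truth Mo (A9g ts (Mx ts) (PfA ts) (pp ts)) w g) := by
  rw [A', truth_bigAnd]
  simp [AlistB, and_assoc]

theorem fMsome {f : ℕ → ℕ → Fin (ts.s + 1)} {n m v : ℕ} :
    sM (fwdModel ts f) (some (n, m)) v ↔ v = 2 * (n + m) := by
  rw [fM]
  constructor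
  · rintro ⟨nm, h, rfl⟩
    cases h; rfl -- some inj
  · intro h; exact ⟨(n, m), rfl, h⟩

theorem forward (f : ℕ → ℕ → Fin (ts.s + 1)) (h1 : ts.T1 f) (h2 : ts.T2 f)
    (h3 : ts.T3 f) : ¬ ValidOn (fun a b : ℕ => a ≤ b) (Fml.neg (A' ts)) := by
  intro hval
  refine hval (fwdModel ts f) 0 (fun _ => none) (fun _ => Set.mem_univ _) ?_
  rw [truth_A'_iff]
  refine ⟨?_, ?_, ?_, ?_, ?_, ?_, ?_, ?_, ?_, ?_⟩
  · -- A0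
    rw [truth_A0]
    refine ⟨none, Set.mem_univ _, fun v _ t hP => ?_⟩
    rw [fP] at hP
    obtain ⟨_, nm, h, _⟩ := hP
    cases h
  · -- A1
    rw [truth_A1]
    refine ⟨some (0, 0), Set.mem_univ _, ⟨f 0 0, ?_⟩, (0, 0), rfl, rfl⟩
    rw [fP]
    exact ⟨rfl, (0, 0), rfl, rfl⟩
  · -- A2
    rw [truth_A2]
    rintro (_ | ⟨n, m⟩) -
    · exact ⟨none, Set.mem_univ _, fRel_of_intended ts f (Or.inl rfl) 0⟩
    · exact ⟨some (n + 1, m), Set.mem_univ _,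
        fRel_of_intended ts f (Or.inr ⟨n, m, rfl⟩) 0⟩
  · -- A3
    rw [truth_A3]
    intro d _ e _ hR v _ _
    exact fRel_of_intended ts f (fRel_intended ts f hR) v
  · -- A4
    rw [truth_A4]
    intro d _ e _ hR v _
    rcases fRel_intended ts f hR with h | ⟨n, m, h⟩ <;>
      rw [Prod.ext_iff] at h <;> obtain ⟨rfl, rfl⟩ := h
    · -- (none, none)
      simp only [fM, fPp, fDia]
      constructor
      · rintro ⟨nm, h, -⟩; cases h
      · rintro ⟨-, ⟨u, -, -, nm, h, -⟩, -⟩; cases h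
    · -- (some (n,m), some (n+1,m))
      simp only [fMsome, fPp, fDia]
      constructor
      · intro hv
        refine ⟨by omega, ⟨2 * (n + 1 + m), by omega, by omega, rfl⟩, ?_⟩
        rintro ⟨u, hu1, hu2, u', hu3, hu4, hu5⟩
        omega
      · rintro ⟨hp, ⟨u, hu1, hu2, hu3⟩, hnot⟩
        by_contra hv
        exact hnot ⟨v + 2, by omega, by omega, 2 * (n + 1 + m), by omega, by omega, rfl⟩
  · -- A5
    rw [truth_A5]
    intro d _ e _ v _ t hM hP u hu hMu
    rw [fM] at hM hMu
    obtain ⟨nm, rfl, hv⟩ := hM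
    obtain ⟨nm', heq, hu'⟩ := hMu
    cases heq
    have : u = v := by omega
    rw [this]
    exact hP
  · -- A6
    rw [truth_A6]
    intro d _ v _ t hP t' hne hP'
    rw [fP] at hP hP'
    obtain ⟨hv, nm, rfl, ht⟩ := hP
    obtain ⟨-, nm', heq, ht'⟩ := hP'
    cases heq
    exact hne (by rw [← ht, ← ht'])
  · -- A7
    rw [truth_A7]
    intro d _ e _ v _ t hR hP
    rw [fP] at hP
    obtain ⟨hv, nm, rfl, ht⟩ := hP
    rcases fRel_intended ts f hR with h | ⟨n', m', h⟩ <;> rw [Prod.ext_iff] at h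
    · exact absurd h.1 (by simp)
    obtain ⟨hd, rfl⟩ := h
    cases hd
    refine ⟨f (n' + 1) (m' + v / 2), ?_, ?_⟩
    · rw [← ht]; exact h1 n' (m' + v / 2)
    · rw [fP]
      exact ⟨hv, (n' + 1, m'), rfl, rfl⟩
  · -- A8
    rw [truth_A8]
    intro d _ e _ v _ t hM hP u hu z _ hRz hMz
    rw [fM] at hM
    obtain ⟨⟨n, m⟩, rfl, hv⟩ := hM
    rcases fRel_intended ts f hRz with h | ⟨n₂, m₂, h⟩ <;> rw [Prod.ext_iff] at h
    · exact absurd h.1 (by simp)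
    obtain ⟨hd, rfl⟩ := h
    cases hd
    rw [fMsome] at hMz
    rw [fP] at hP
    obtain ⟨hv2, nm, rfl, ht⟩ := hP
    refine ⟨f nm.1 (nm.2 + v / 2 + 1), ?_, ?_⟩
    · rw [← ht]; exact h2 nm.1 (nm.2 + v / 2)
    · rw [fP]
      refine ⟨by omega, nm, rfl, ?_⟩
      rw [show nm.2 + u / 2 = nm.2 + v / 2 + 1 by omega]
  · -- A9
    rw [truth_A9]
    intro d _ hM v _
    rw [fM] at hM
    obtain ⟨⟨n, m⟩, rfl, h0⟩ := hM
    have hn : n = 0 := by omega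
    have hm : m = 0 := by omega
    subst hn hm
    rw [fDia]
    obtain ⟨k, hk, hk2⟩ := infinite_unbounded h3 v
    refine ⟨2 * k, by omega, by omega, ?_⟩
    rw [fP]
    refine ⟨by omega, (0, 0), rfl, ?_⟩
    rw [show (0 : ℕ) + 2 * k / 2 = k by omega]
    exact hk

end FwdMain

section Back
open Enc

theorem sDia_def {ts : TileSet} (Mo : KModel ℕ (fun a b : ℕ => a ≤ b) (Letter ts.s))
    {φ : ℕ → Prop} {v : ℕ} :
    sDia Mo φ v ↔ ∃ u₁, v ≤ u₁ ∧ sPp Mo u₁ ∧ ∃ u₂, u₁ ≤ u₂ ∧ ¬ sPp Mo u₂ ∧ φ u₂ :=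
  Iff.rfl

theorem backward (ts : TileSet)
    (h : ¬ ValidOn (fun a b : ℕ => a ≤ b) (Fml.neg (A' ts))) :
    ∃ f : ℕ → ℕ → Fin (ts.s + 1), ts.T1 f ∧ ts.T2 f ∧ ts.T3 f := by
  classical
  simp only [ValidOn, trueAt, not_forall] at h
  obtain ⟨Mo, w₀, g, hg, hA⟩ := h
  rw [truth_neg, not_not] at hA
  rw [truth_A'_iff] at hA
  obtain ⟨-, t1, t2, t3, t4, t5, t6, t7, t8, t9⟩ := hA
  rw [truth_A1] at t1
  rw [truth_A2] at t2
  rw [truth_A3] at t3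
  rw [truth_A4] at t4
  rw [truth_A5] at t5
  rw [truth_A6] at t6
  rw [truth_A7] at t7
  rw [truth_A8] at t8
  rw [truth_A9] at t9
  -- the chain a₀ ◁ a₁ ◁ a₂ ◁ ⋯
  obtain ⟨a0, ha0D, ⟨tt0, htt0⟩, hM0⟩ := t1
  choose F hFD hFR using t2
  let A : ℕ → {d : Mo.Dom // d ∈ Mo.D w₀} := fun n =>
    Nat.rec ⟨a0, ha0D⟩ (fun _ p => ⟨F p.1 p.2, hFD p.1 p.2⟩) n
  let a : ℕ → Mo.Dom := fun n => (A n).1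
  have haD : ∀ n, a n ∈ Mo.D w₀ := fun n => (A n).2
  have haR : ∀ n, sRel Mo (a n) (a (n + 1)) w₀ := fun n => hFR (A n).1 (A n).2
  have hM0' : sM Mo (a 0) w₀ := hM0
  have htt0' : sP Mo (tl ts tt0) (a 0) w₀ := htt0
  -- the A₄ biconditional for chain pairs
  have hIff : ∀ n v, w₀ ≤ v →
      (sM Mo (a n) v ↔ ¬ sPp Mo v ∧ sDia Mo (sM Mo (a (n + 1))) v ∧
        ¬ sDia Mo (fun u => sDia Mo (sM Mo (a (n + 1))) u) v) :=
    fun n v hv => t4 (a n) (haD n) (a (n + 1)) (haD (n + 1)) (haR n) v hv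
  -- step: from M(aₙ) at v produce the next pair of worlds
  have step : ∀ n v, w₀ ≤ v → sM Mo (a n) v →
      ∃ c u, v ≤ c ∧ c ≤ u ∧ sPp Mo c ∧ ¬ sPp Mo u ∧ sM Mo (a (n + 1)) u := by
    intro n v hv hM
    obtain ⟨-, hD, -⟩ := (hIff n v hv).1 hM
    obtain ⟨c, hc1, hc2, u, hu1, hu2, hu3⟩ := (sDia_def Mo).1 hD
    exact ⟨c, u, hc1, hu1, hc2, hu2, hu3⟩
  choose qF uF hst1 hst2 hst3 hst4 hst5 using step
  -- the chain of worlds v₀ < v₁ < ⋯ with M(aₙ) at vₙ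
  let V : (n : ℕ) → {x : ℕ // w₀ ≤ x ∧ sM Mo (a n) x} := fun n =>
    @Nat.rec (fun n => {x : ℕ // w₀ ≤ x ∧ sM Mo (a n) x}) ⟨w₀, le_rfl, hM0'⟩
      (fun k p => ⟨uF k p.1 p.2.1 p.2.2,
        le_trans p.2.1 (le_trans (hst1 k p.1 p.2.1 p.2.2) (hst2 k p.1 p.2.1 p.2.2)),
        hst5 k p.1 p.2.1 p.2.2⟩) n
  let v : ℕ → ℕ := fun n => (V n).1
  have hvw : ∀ n, w₀ ≤ v n := fun n => (V n).2.1
  have hvM : ∀ n, sM Mo (a n) (v n) := fun n => (V n).2.2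
  let q : ℕ → ℕ := fun n => qF n (v n) (hvw n) (hvM n)
  have hVsucc : ∀ n, v (n + 1) = uF n (v n) (hvw n) (hvM n) := fun n => rfl
  have hq1 : ∀ n, v n ≤ q n := fun n => hst1 n (v n) (hvw n) (hvM n)
  have hq2 : ∀ n, q n ≤ v (n + 1) := fun n => by
    rw [hVsucc n]; exact hst2 n (v n) (hvw n) (hvM n)
  have hqp : ∀ n, sPp Mo (q n) := fun n => hst3 n (v n) (hvw n) (hvM n)
  have hvnp : ∀ n, ¬ sPp Mo (v n) := by
    intro n
    cases n with
    | zero => exact ((hIff 0 w₀ le_rfl).1 hM0').1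
    | succ k => rw [hVsucc k]; exact hst4 k (v k) (hvw k) (hvM k)
  have hvlt : ∀ n, v n < v (n + 1) := fun n =>
    lt_of_lt_of_le (lt_of_le_of_ne (hq1 n) fun hc => hvnp n (hc ▸ hqp n)) (hq2 n)
  have hsm : StrictMono v := strictMono_nat_of_lt_succ hvlt
  have hvge : ∀ n, n ≤ v n := by
    intro n
    induction n with
    | zero => exact Nat.zero_le _
    | succ k ih => exact lt_of_le_of_lt ih (hvlt k)
  -- tiles
  have huniq : ∀ d, d ∈ Mo.D w₀ → ∀ u, w₀ ≤ u → ∀ t t' : Fin (ts.s + 1),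
      sP Mo (tl ts t) d u → sP Mo (tl ts t') d u → t = t' := by
    intro d hd u hu t t' hT hT'
    by_contra hne
    exact t6 d hd u hu t hT t' (fun hh => hne hh.symm) hT'
  have hMne : ∀ k, ∃ z ∈ Mo.D (v k), sM Mo z (v k) := fun k =>
    ⟨a k, Mo.D_mono (hvw k) (haD k), hvM k⟩
  have hRelV : ∀ n k, sRel Mo (a n) (a (n + 1)) (v k) := fun n k =>
    t3 (a n) (haD n) (a (n + 1)) (haD (n + 1)) (haR n) (v k) (hvw k) (hMne k)
  have hcol0 : ∀ m, ∃ t, sP Mo (tl ts t) (a 0) (v m) := by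
    intro m
    induction m with
    | zero => exact ⟨tt0, htt0'⟩
    | succ k ih =>
      obtain ⟨t, ht⟩ := ih
      obtain ⟨t', -, ht'⟩ := t8 (a k) (haD k) (a 0) (haD 0) (v k) (hvw k) t (hvM k) ht
        (v (k + 1)) (le_of_lt (hvlt k)) (a (k + 1)) (Mo.D_mono (hvw (k + 1)) (haD (k + 1)))
        (hRelV k (k + 1)) (hvM (k + 1))
      exact ⟨t', ht'⟩
  have hall : ∀ n m, ∃ t, sP Mo (tl ts t) (a n) (v m) := by
    intro n
    induction n with
    | zero => exact hcol0
    | succ k ih =>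
      intro m
      obtain ⟨t, ht⟩ := ih m
      obtain ⟨t', -, ht'⟩ := t7 (a k) (haD k) (a (k + 1)) (haD (k + 1)) (v m) (hvw m) t
        (hRelV k m) ht
      exact ⟨t', ht'⟩
  choose ff hff using hall
  refine ⟨ff, ?_, ?_, ?_⟩
  · -- T1
    intro n m
    obtain ⟨t', hrl, ht'⟩ := t7 (a n) (haD n) (a (n + 1)) (haD (n + 1)) (v m) (hvw m)
      (ff n m) (hRelV n m) (hff n m)
    rw [huniq (a (n + 1)) (haD (n + 1)) (v m) (hvw m) (ff (n + 1) m) t' (hff (n + 1) m) ht']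
    exact hrl
  · -- T2
    intro n m
    obtain ⟨t', hud, ht'⟩ := t8 (a m) (haD m) (a n) (haD n) (v m) (hvw m) (ff n m) (hvM m)
      (hff n m) (v (m + 1)) (le_of_lt (hvlt m)) (a (m + 1))
      (Mo.D_mono (hvw (m + 1)) (haD (m + 1))) (hRelV m (m + 1)) (hvM (m + 1))
    rw [huniq (a n) (haD n) (v (m + 1)) (hvw (m + 1)) (ff n (m + 1)) t' (hff n (m + 1)) ht']
    exact hud
  · -- T3
    have hT3 : ∀ m, ∃ k, m ≤ k ∧ ff 0 k = 0 := by
      intro m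
      obtain ⟨u₁, hu11, hu12, u₂, hu21, hu22, hu23⟩ :=
        (sDia_def Mo).1 (t9 (a 0) (haD 0) hM0' (v m) (hvw m))
      have hw0u₂ : w₀ ≤ u₂ := le_trans (hvw m) (le_trans hu11 hu21)
      have hvmu₂ : v m ≤ u₂ := le_trans hu11 hu21
      -- K := largest k with v k ≤ u₂
      set K := Nat.findGreatest (fun k => v k ≤ u₂) u₂ with hKdef
      have hKle : v K ≤ u₂ := by
        have := Nat.findGreatest_spec (P := fun k => v k ≤ u₂)
          (le_trans (hvge m) hvmu₂) hvmu₂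
        rwa [← hKdef] at this
      have hK1 : u₂ < v (K + 1) := by
        by_contra hcon
        push_neg at hcon
        have h1 : K + 1 ≤ u₂ := le_trans (hvge (K + 1)) hcon
        have h2 := Nat.le_findGreatest (P := fun k => v k ≤ u₂) h1 hcon
        rw [← hKdef] at h2
        omega
      have hmK : m ≤ K := by
        have := Nat.le_findGreatest (P := fun k => v k ≤ u₂)
          (le_trans (hvge m) hvmu₂) hvmu₂
        rwa [← hKdef] at this
      -- the set S of k with ⟐M(a_{k+1}) at u₂
      set S : ℕ → Prop := fun k => sDia Mo (sM Mo (a (k + 1))) u₂ with hSdef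
      have hSne : S (K + 1) := by
        refine (sDia_def Mo).2 ⟨q (K + 1), ?_, hqp (K + 1), v (K + 2), hq2 (K + 1),
          hvnp (K + 2), hvM (K + 2)⟩
        exact le_trans (le_of_lt hK1) (hq1 (K + 1))
      have hex : ∃ k, S k := ⟨K + 1, hSne⟩
      set k₀ := Nat.find hex with hk₀def
      have hk₀S : S k₀ := by rw [hk₀def]; exact Nat.find_spec hex
      have hk₀min : ∀ j, j < k₀ → ¬ S j := by
        intro j hj
        rw [hk₀def] at hj
        exact Nat.find_min hex hj
      -- k₀ fails the double diamond
      have hnD2 : ¬ sDia Mo (fun u => sDia Mo (sM Mo (a (k₀ + 1))) u) u₂ := by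
        intro hD2
        by_cases hcase : k₀ ≤ K
        · exact ((hIff k₀ (v k₀) (hvw k₀)).1 (hvM k₀)).2.2
            (sDia_mono Mo (le_trans (hsm.monotone hcase) hKle) hD2)
        · push_neg at hcase
          by_cases hcase2 : k₀ = K + 1
          · rw [hcase2] at hD2
            have hnflip : ∀ c, u₂ ≤ c → c ≤ v (K + 1) → ¬ sPp Mo c := by
              intro c h1 h2 hp
              exact hk₀min K (by omega) ((sDia_def Mo).2
                ⟨c, h1, hp, v (K + 1), h2, hvnp (K + 1), hvM (K + 1)⟩)
            obtain ⟨c₁, hc1, hc1p, c₂, hc2, hc2np, hc2D⟩ := (sDia_def Mo).1 hD2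
            have hc1v : v (K + 1) ≤ c₁ := by
              by_contra hlt
              push_neg at hlt
              exact hnflip c₁ hc1 (le_of_lt hlt) hc1p
            exact ((hIff (K + 1) (v (K + 1)) (hvw (K + 1))).1 (hvM (K + 1))).2.2
              ((sDia_def Mo).2 ⟨c₁, hc1v, hc1p, c₂, hc2, hc2np, hc2D⟩)
          · have hk2 : K + 2 ≤ k₀ := by omega
            refine hk₀min (k₀ - 1) (by omega) ?_
            refine (sDia_def Mo).2 ⟨q (K + 1), le_trans (le_of_lt hK1) (hq1 (K + 1)),
              hqp (K + 1), v k₀, ?_, hvnp k₀, ?_⟩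
            · exact le_trans (hq2 (K + 1)) (hsm.monotone hk2)
            · have hkk : k₀ - 1 + 1 = k₀ := by omega
              rw [hkk]
              exact hvM k₀
      have hMk₀ : sM Mo (a k₀) u₂ :=
        (hIff k₀ u₂ hw0u₂).2 ⟨hu22, hk₀S, hnD2⟩
      -- K ≤ k₀
      have hKk₀ : K ≤ k₀ := by
        by_contra hlt
        push_neg at hlt
        by_cases hz : k₀ = 0
        · rw [hz] at hMk₀
          obtain ⟨-, hD, -⟩ := (hIff 0 u₂ hw0u₂).1 hMk₀
          obtain ⟨d₁, hd1, hd1p, d₂, hd2, hd2np, hd2M⟩ := (sDia_def Mo).1 hD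
          refine ((hIff 0 (v 0) (hvw 0)).1 (hvM 0)).2.2 ((sDia_def Mo).2
            ⟨q 0, hq1 0, hqp 0, v 1, hq2 0, hvnp 1, (sDia_def Mo).2
              ⟨d₁, ?_, hd1p, d₂, hd2, hd2np, hd2M⟩⟩)
          exact le_trans (le_trans (hsm.monotone (show 1 ≤ K by omega)) hKle) hd1
        · obtain ⟨j, hj⟩ := Nat.exists_eq_succ_of_ne_zero hz
          rw [hj] at hMk₀
          refine ((hIff j (v j) (hvw j)).1 (hvM j)).2.2 ((sDia_def Mo).2
            ⟨q j, hq1 j, hqp j, v (j + 1), hq2 j, hvnp (j + 1), (sDia_def Mo).2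
              ⟨q (j + 1), hq1 (j + 1), hqp (j + 1), u₂, ?_, hu22, hMk₀⟩⟩)
          exact le_trans (hq2 (j + 1))
            (le_trans (hsm.monotone (show j + 2 ≤ K by omega)) hKle)
      -- conclude the tile of a₀ in row k₀ is t₀
      have hfk : ff 0 k₀ = 0 := by
        rcases le_total (v k₀) u₂ with hle | hle
        · have hP := t5 (a k₀) (haD k₀) (a 0) (haD 0) (v k₀) (hvw k₀) (ff 0 k₀)
            (hvM k₀) (hff 0 k₀) u₂ hle hMk₀
          exact huniq (a 0) (haD 0) u₂ hw0u₂ (ff 0 k₀) 0 hP hu23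
        · have hP := t5 (a k₀) (haD k₀) (a 0) (haD 0) u₂ hw0u₂ 0 hMk₀ hu23
            (v k₀) hle (hvM k₀)
          exact huniq (a 0) (haD 0) (v k₀) (hvw k₀) (ff 0 k₀) 0 (hff 0 k₀) hP
      exact ⟨k₀, le_trans hmK hKk₀, hfk⟩
    by_contra hfin
    rw [TileSet.T3] at hfin
    rw [Set.not_infinite] at hfin
    obtain ⟨b, hb⟩ := hfin.bddAbove
    obtain ⟨k, hk1, hk2⟩ := hT3 (b + 1)
    have := hb (show k ∈ {m | ff 0 m = 0} from hk2)
    omega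

end Back

/-- There exists a recurrent tiling of ℕ×ℕ (a function `f : ℕ×ℕ → T`
satisfying (T1), (T2) and (T3)) if and only if `¬A′` is not valid on the frame `⟨ℕ,≤⟩`. -/
theorem statement2 (ts : TileSet) :
    (∃ f : ℕ → ℕ → Fin (ts.s + 1), ts.T1 f ∧ ts.T2 f ∧ ts.T3 f) ↔
      ¬ ValidOn (fun a b : ℕ => a ≤ b) (Fml.neg (A' ts)) := by
  constructor
  · rintro ⟨f, h1, h2, h3⟩
    exact forward f h1 h2 h3
  · exact backward ts

end FOML
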